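/- arXiv:2108.00984 — 3 statements merged into one kernel-verified Lean document; each statement's English description precedes it below -/
import Mathlib

section
/- Let A be a dg-algebra, x_• a twisting sequence in A, and z ∈ A^{2s} a cochain with dz = a ∈ A^{2s+1}. Then there exists a twisting sequence x'_• homotopic to x_• with x'_{2i+1} = x_{2i+1} for all i < s and x'_{2s+1} = x_{2s+1} − a. -/
/-- A differential graded algebra over `ℤ`. -/
structure DGA where
  A : Type
  [ringA : Ring A]
  grading : ℤ → AddSubgroup A
  mul_mem : ∀ {m n : ℤ} {a b : A}, a ∈ grading m → b ∈ grading n → a * b ∈ grading (m + n)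
  d : A →+ A
  d_sq : ∀ a : A, d (d a) = 0
  d_mem : ∀ {m : ℤ} {a : A}, a ∈ grading m → d a ∈ grading (m + 1)
  leibniz : ∀ {m : ℤ} {a : A}, a ∈ grading m → ∀ b : A,
      d (a * b) = d a * b + (((-1 : ℤˣ) ^ m : ℤˣ) : ℤ) • (a * d b)

attribute [instance] DGA.ringA

/-- A twisting sequence: `x n` is `x_{2n+1}` for `n ≥ 1`. -/
def IsTwistingSeq (G : DGA) (x : ℕ → G.A) : Prop :=
  x 0 = 0 ∧ (∀ n : ℕ, x n ∈ G.grading (2 * (n : ℤ) + 1)) ∧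
    ∀ n : ℕ, 1 ≤ n →
      G.d (x n) + ∑ i ∈ Finset.Ioo 0 n, x i * x (n - i) = 0

/-- A homotopy `h_•` from the twisting sequence `x_•` to the twisting sequence `y_•`. -/
def IsHomotopy (G : DGA) (x y h : ℕ → G.A) : Prop :=
  h 0 = 0 ∧ (∀ n : ℕ, h n ∈ G.grading (2 * (n : ℤ))) ∧
    ∀ n : ℕ, 1 ≤ n →
      y n - x n + G.d (h n) +
        ∑ i ∈ Finset.Ioo 0 n, (y (n - i) * h i - h i * x (n - i)) = 0

/-- Two twisting sequences are homotopic if there is a homotopy between them. -/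
def Homotopic (G : DGA) (x y : ℕ → G.A) : Prop :=
  ∃ h : ℕ → G.A, IsHomotopy G x y h

/-!
Encode a sequence `a_•` in `A` as the power series `∑ aₙ tⁿ`, with `t` of degree `-2` and the
coefficientwise differential. A twisting sequence becomes a series `X` of degree `1` with
`dX + X² = 0`, and a homotopy `h_•` from `x_•` to `y_•` becomes the gauge relation
`Y (1 + H) = X + H X - dH`. As `1 + H` is invertible, any `H` of degree `0` without constant term
transports `X` to `Y = (X + H X - dH) (1 + H)⁻¹`, and differentiating the gauge relation
gives `(dY + Y²) (1 + H) = 0`, so `Y` is again twisting. For `H = z tˢ` nothing changes below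
`tˢ`, and the coefficient of `tˢ` loses `dz`.
-/

open PowerSeries Finset

theorem Finset.Nat.sum_antidiagonal_eq_sum_Ioo {M : Type*} [AddCommMonoid M] (F : ℕ → ℕ → M)
    (n : ℕ) (h₀ : F 0 n = 0) (h₁ : F n 0 = 0) :
    ∑ p ∈ antidiagonal n, F p.1 p.2 = ∑ i ∈ Ioo 0 n, F i (n - i) := by
  rw [Nat.sum_antidiagonal_eq_sum_range_succ]
  refine (sum_subset (fun i hi => ?_) fun i hi hi' => ?_).symm
  · simp only [mem_Ioo, mem_range] at hi ⊢
    omega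
  · simp only [mem_Ioo, mem_range, not_and, not_lt] at hi hi'
    obtain rfl | rfl : i = 0 ∨ i = n := by omega
    exacts [h₀, by rwa [Nat.sub_self]]

section

variable {R : Type*} [Ring R] {f g : ℕ → R}

theorem PowerSeries.coeff_mk_mul_mk (hf : f 0 = 0) (hg : g 0 = 0) (n : ℕ) :
    coeff n (mk f * mk g) = ∑ i ∈ Ioo 0 n, f i * g (n - i) := by
  rw [coeff_mul]
  simp only [coeff_mk]
  exact Nat.sum_antidiagonal_eq_sum_Ioo (fun i j => f i * g j) n (by simp [hf])
    (by simp [hg])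

theorem PowerSeries.coeff_mk_mul_mk' (hf : f 0 = 0) (hg : g 0 = 0) (n : ℕ) :
    coeff n (mk f * mk g) = ∑ i ∈ Ioo 0 n, f (n - i) * g i := by
  rw [coeff_mul, ← Nat.sum_antidiagonal_swap]
  simp only [coeff_mk, Prod.fst_swap, Prod.snd_swap]
  exact Nat.sum_antidiagonal_eq_sum_Ioo (fun i j => f j * g i) n (by simp [hg])
    (by simp [hf])

end

theorem maurerCartan_of_gauge {R : Type*} [Ring R] (D : R →+ R) {X Y H : R}
    (hDD : D (D H) = 0) (hYH : D (Y * H) = D Y * H - Y * D H)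
    (hHX : D (H * X) = D H * X + H * D X) (hX : D X + X * X = 0)
    (hgauge : Y - X + D H + Y * H - H * X = 0) (hH : IsUnit (1 + H)) :
    D Y + Y * Y = 0 := by
  have hDH : D H = X + H * X - Y - Y * H := by
    rw [← sub_eq_zero, ← hgauge]; noncomm_ring
  have hDY : D Y + D Y * H = D X + D H * X + H * D X + Y * D H := by
    have := congrArg D hgauge
    simp only [map_add, map_sub, map_zero, hDD, hYH, hHX] at this
    rw [← sub_eq_zero, ← this]; noncomm_ring
  refine hH.mul_right_cancel ?_
  rw [zero_mul, add_mul, mul_add, mul_one, hDY, eq_neg_of_add_eq_zero_left hX, hDH]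
  noncomm_ring

namespace DGA

variable (G : DGA)

noncomputable def dSeries : G.A⟦X⟧ →+ G.A⟦X⟧ where
  toFun φ := PowerSeries.mk fun n => G.d (coeff n φ)
  map_zero' := by ext; simp
  map_add' φ ψ := by ext; simp

@[simp]
theorem coeff_dSeries (φ : G.A⟦X⟧) (n : ℕ) : coeff n (G.dSeries φ) = G.d (coeff n φ) :=
  coeff_mk n fun n => G.d (coeff n φ)

@[simp]
theorem constantCoeff_dSeries (φ : G.A⟦X⟧) :
    constantCoeff (G.dSeries φ) = G.d (constantCoeff φ) := by
  rw [← coeff_zero_eq_constantCoeff_apply, coeff_dSeries, coeff_zero_eq_constantCoeff_apply]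

theorem dSeries_dSeries (φ : G.A⟦X⟧) : G.dSeries (G.dSeries φ) = 0 := by
  ext; simp [G.d_sq]

/-- Homogeneity of degree `e` of `∑ aₙ tⁿ`, where `t` has degree `-2`. -/
def IsHomogeneous (e : ℤ) (φ : G.A⟦X⟧) : Prop :=
  ∀ n : ℕ, coeff n φ ∈ G.grading (2 * n + e)

variable {G}

namespace IsHomogeneous

variable {e f : ℤ} {φ ψ : G.A⟦X⟧}

theorem add (hφ : G.IsHomogeneous e φ) (hψ : G.IsHomogeneous e ψ) :
    G.IsHomogeneous e (φ + ψ) :=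
  fun n => by simpa using add_mem (hφ n) (hψ n)

theorem sub (hφ : G.IsHomogeneous e φ) (hψ : G.IsHomogeneous e ψ) :
    G.IsHomogeneous e (φ - ψ) :=
  fun n => by simpa using sub_mem (hφ n) (hψ n)

theorem dSeries (hφ : G.IsHomogeneous e φ) : G.IsHomogeneous (e + 1) (G.dSeries φ) :=
  fun n => by simpa [add_assoc] using G.d_mem (hφ n)

theorem coeff_mul_coeff_mem {n : ℕ} {p : ℕ × ℕ} (hp : p ∈ antidiagonal n)
    (hφ : coeff p.1 φ ∈ G.grading (2 * p.1 + e)) (hψ : G.IsHomogeneous f ψ) :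
    coeff p.1 φ * coeff p.2 ψ ∈ G.grading (2 * n + (e + f)) := by
  convert G.mul_mem hφ (hψ p.2) using 2
  rw [← mem_antidiagonal.mp hp]
  push_cast
  ring

theorem mul (hφ : G.IsHomogeneous e φ) (hψ : G.IsHomogeneous f ψ) :
    G.IsHomogeneous (e + f) (φ * ψ) := fun n => by
  rw [coeff_mul]
  exact sum_mem fun p hp => hψ.coeff_mul_coeff_mem hp (hφ p.1)

theorem of_eq_sub_mul {Y N H : G.A⟦X⟧} (hN : G.IsHomogeneous e N)
    (hH : G.IsHomogeneous 0 H) (hH₀ : constantCoeff H = 0) (hY : Y = N - Y * H) :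
    G.IsHomogeneous e Y := by
  intro n
  induction n using Nat.strong_induction_on with
  | _ n ih =>
    rw [hY, map_sub, coeff_mul]
    refine sub_mem (hN n) (sum_mem fun p hp => ?_)
    rcases Nat.eq_zero_or_pos p.2 with h0 | h0
    · rw [h0, coeff_zero_eq_constantCoeff_apply, hH₀, mul_zero]
      exact zero_mem _
    · have hlt : p.1 < n := by have := mem_antidiagonal.mp hp; omega
      simpa using hH.coeff_mul_coeff_mem hp (ih p.1 hlt)

end IsHomogeneous

theorem dSeries_mul {e : ℤ} {φ : G.A⟦X⟧} (hφ : G.IsHomogeneous e φ) (ψ : G.A⟦X⟧) :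
    G.dSeries (φ * ψ) =
      G.dSeries φ * ψ + (((-1 : ℤˣ) ^ e : ℤˣ) : ℤ) • (φ * G.dSeries ψ) := by
  ext n
  simp only [coeff_dSeries, map_add, map_zsmul, coeff_mul, map_sum, smul_sum,
    ← sum_add_distrib]
  refine sum_congr rfl fun p _ => ?_
  rw [G.leibniz (hφ p.1), zpow_add, zpow_mul]
  simp

end DGA

section

open DGA

variable {G : DGA}

theorem isTwistingSeq_iff {x : ℕ → G.A} :
    IsTwistingSeq G x ↔ x 0 = 0 ∧ G.IsHomogeneous 1 (PowerSeries.mk x) ∧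
      G.dSeries (PowerSeries.mk x) + PowerSeries.mk x * PowerSeries.mk x = 0 := by
  simp only [IsTwistingSeq, IsHomogeneous, coeff_mk]
  refine and_congr_right fun hx₀ => and_congr_right fun _ => ?_
  rw [PowerSeries.ext_iff]
  refine forall_congr' fun n => ?_
  rw [map_add, coeff_dSeries, coeff_mk, coeff_mk_mul_mk hx₀ hx₀, map_zero]
  rcases Nat.eq_zero_or_pos n with rfl | hn
  · simp [hx₀]
  · exact ⟨fun h => h hn, fun h _ => h⟩

theorem isHomotopy_of_gauge {x y h : ℕ → G.A} (hx₀ : x 0 = 0) (hy₀ : y 0 = 0)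
    (hh₀ : h 0 = 0) (hh : G.IsHomogeneous 0 (PowerSeries.mk h))
    (hgauge : PowerSeries.mk y - PowerSeries.mk x + G.dSeries (PowerSeries.mk h) +
      PowerSeries.mk y * PowerSeries.mk h - PowerSeries.mk h * PowerSeries.mk x = 0) :
    IsHomotopy G x y h := by
  refine ⟨hh₀, fun n => by simpa using hh n, fun n _ => ?_⟩
  have := congrArg (coeff n) hgauge
  rwa [map_sub, map_add, map_add, map_sub, coeff_dSeries, coeff_mk, coeff_mk, coeff_mk,
    coeff_mk_mul_mk' hy₀ hh₀, coeff_mk_mul_mk hh₀ hx₀, map_zero, add_sub_assoc,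
    ← sum_sub_distrib] at this

theorem IsTwistingSeq.exists_isHomotopy {x h : ℕ → G.A} (hx : IsTwistingSeq G x)
    (hh₀ : h 0 = 0) (hh : ∀ n : ℕ, h n ∈ G.grading (2 * n)) :
    ∃ y : ℕ → G.A, IsTwistingSeq G y ∧ IsHomotopy G x y h := by
  obtain ⟨hx₀, hX, hMC⟩ := isTwistingSeq_iff.mp hx
  set X := PowerSeries.mk x
  set H := PowerSeries.mk h
  have hH : G.IsHomogeneous 0 H := fun n => by simpa [H] using hh n
  have hH₀ : constantCoeff H = 0 := by rw [← coeff_zero_eq_constantCoeff_apply, coeff_mk, hh₀]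
  have hu : IsUnit (1 + H) := isUnit_iff_constantCoeff.mpr (by simp [hH₀])
  set N := X + H * X - G.dSeries H
  set Y := N * invOfUnit (1 + H) 1
  have hYN : Y + Y * H = N := by
    rw [← mul_one_add, mul_assoc, invOfUnit_mul _ _ (by simp [hH₀]), mul_one]
  have hN : G.IsHomogeneous 1 N :=
    (hX.add (by simpa using hH.mul hX)).sub (by simpa using hH.dSeries)
  have hY : G.IsHomogeneous 1 Y := hN.of_eq_sub_mul hH hH₀ (eq_sub_of_add_eq hYN)
  have hY₀ : coeff 0 Y = 0 := by
    simpa [N, X, H, hx₀, hh₀, coeff_zero_eq_constantCoeff_apply, hH₀] using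
      congrArg (coeff 0) hYN
  have hgauge : Y - X + G.dSeries H + Y * H - H * X = 0 := by
    rw [← sub_eq_zero.mpr hYN]
    simp only [N]
    abel
  have hmk : PowerSeries.mk (fun n => coeff n Y) = Y := by ext; simp
  have hMCY : G.dSeries Y + Y * Y = 0 :=
    maurerCartan_of_gauge G.dSeries (G.dSeries_dSeries H)
      (by simpa [sub_eq_add_neg] using dSeries_mul hY H) (by simpa using dSeries_mul hH X)
      hMC hgauge hu
  refine ⟨fun n => coeff n Y, isTwistingSeq_iff.mpr ⟨hY₀, ?_⟩,
    isHomotopy_of_gauge hx₀ hY₀ hh₀ hH ?_⟩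
  · rw [hmk]
    exact ⟨hY, hMCY⟩
  · rwa [hmk]

theorem IsHomotopy.apply_eq_of_forall_lt {x y h : ℕ → G.A} (hxy : IsHomotopy G x y h) {n : ℕ}
    (hn : 1 ≤ n) (hh : ∀ i, 0 < i → i < n → h i = 0) : y n = x n - G.d (h n) := by
  have := hxy.2.2 n hn
  rw [sum_eq_zero fun i hi => by simp [hh i (mem_Ioo.mp hi).1 (mem_Ioo.mp hi).2], add_zero,
    sub_add_eq_add_sub, sub_eq_zero] at this
  exact eq_sub_of_add_eq this

end

/-- Given a twisting sequence `x_•` and a coboundary `a = dz` with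
`z ∈ A^{2s}`, there is a twisting sequence `x'_•` homotopic to `x_•` which agrees with
`x_•` in all degrees below `2s+1` and has `x'_{2s+1} = x_{2s+1} − a`. -/
theorem twisting_add_coboundary (G : DGA) (x : ℕ → G.A) (hx : IsTwistingSeq G x)
    (s : ℕ) (hs : 1 ≤ s) (z : G.A) (hz : z ∈ G.grading (2 * (s : ℤ))) :
    ∃ x' : ℕ → G.A, IsTwistingSeq G x' ∧ Homotopic G x x' ∧
      (∀ i : ℕ, i < s → x' i = x i) ∧ x' s = x s - G.d z := by
  set h : ℕ → G.A := fun n => if n = s then z else 0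
  have hh : ∀ n : ℕ, h n ∈ G.grading (2 * n) := fun n => by
    by_cases hn : n = s
    · simpa [h, hn] using hz
    · simp [h, hn]
  obtain ⟨y, hy, hxy⟩ := hx.exists_isHomotopy (h := h) (if_neg (by omega)) hh
  have hys : ∀ n, 1 ≤ n → n ≤ s → y n = x n - G.d (h n) := fun n hn hns =>
    hxy.apply_eq_of_forall_lt hn fun i _ hi => if_neg (by omega)
  refine ⟨y, hy, ⟨h, hxy⟩, fun i hi => ?_, by simpa [h] using hys s hs le_rfl⟩
  rcases Nat.eq_zero_or_pos i with rfl | hi₀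
  · rw [hy.1, hx.1]
  · simpa [h, hi.ne] using hys i hi₀ hi.le
end

section
/- Let a = Σ_I a_I e^I ∈ Λ^{odd}(ℤ^b) be a sum of odd-degree basis monomials, and let j_m denote the symmetric multilinear insertion product. Then j_m(a,...,a) = m! · Σ_{{I_1,...,I_m} 1-regular, pairwise distinct} a_{I_1}···a_{I_m} j_m(e^{I_1},...,e^{I_m}); in particular j_m(a,...,a) is divisible by m! in Λ*(ℤ^b), so the insertion power a^{∘m} := j_m(a,...,a)/m! is well-defined over ℤ. -/
open scoped Classical

/-- The exterior algebra `Λ*(ℤ^b)`, recorded via coefficients on the basis monomials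
`e^I`, `I ⊆ {1,…,b}`. -/
abbrev Exterior (b : ℕ) : Type := Finset (Fin b) → ℤ

/-- The basis monomial `e^I`. -/
def eMono {b : ℕ} (I : Finset (Fin b)) : Exterior b := fun S => if S = I then 1 else 0

/-- `v` and `w` are consecutive elements of `S` (the edges of the path graph on `S`). -/
def consecIn {b : ℕ} (S : Finset (Fin b)) (v w : Fin b) : Prop :=
  v ∈ S ∧ w ∈ S ∧ v ≠ w ∧ ∀ u ∈ S, ¬(min v w < u ∧ u < max v w)

/-- The underlying simple graph of the graph realization `R(I_1,…,I_m)`: path graphs on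
each `I_k`, glued along shared labels. -/
def realGraph {b m : ℕ} (I : Fin m → Finset (Fin b)) : SimpleGraph (Fin b) where
  Adj v w := ∃ k, consecIn (I k) v w
  symm := by
    constructor
    rintro v w ⟨k, h1, h2, h3, h4⟩
    exact ⟨k, h2, h1, h3.symm, by rw [min_comm w v, max_comm w v]; exact h4⟩
  loopless := by constructor; rintro v ⟨k, _, _, h3, _⟩; exact h3 rfl

/-- A family of subsets is 1-regular if its graph realization is a tree: all sets are
nonempty, the graph is connected on the union of the sets, and the total number of edges
(with multiplicity) equals the number of vertices minus one (so the multigraph has no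
cycles and no repeated edges). -/
def OneRegular {b m : ℕ} (I : Fin m → Finset (Fin b)) : Prop :=
  (∀ k, (I k).Nonempty) ∧
    (∑ k : Fin m, (((I k).card : ℤ) - 1)) = ((Finset.univ.biUnion I).card : ℤ) - 1 ∧
    ∀ v w : Fin b, v ∈ Finset.univ.biUnion I → w ∈ Finset.univ.biUnion I →
      (realGraph I).Reachable v w

/-- An (arbitrary) linear order code for subsets, used to enumerate unordered families by
their sorted tuples. -/
def subsetCode {b : ℕ} (I : Finset (Fin b)) : ℕ := ∑ x ∈ I, 2 ^ (x : ℕ)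

/-!
Expand `j (a, …, a)` multilinearly over the basis monomials. Tuples that are not 1-regular or
that repeat a monomial contribute nothing, so only injective tuples remain. Every injective
tuple is uniquely a strictly increasing tuple (in the order given by `subsetCode`) composed with a
permutation, and by the symmetry of `j` all `m!` permutations of a tuple contribute the same
term.
-/

open Finset Function Equiv

theorem subsetCode_injective {b : ℕ} : Injective (subsetCode (b := b)) := by
  have : subsetCode (b := b) =
      (fun s : Finset ℕ ↦ ∑ i ∈ s, 2 ^ i) ∘ map Fin.valEmbedding := by
    funext S
    simp [subsetCode]
  rw [this]
  exact (geomSum_injective le_rfl).comp (map_injective _)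

theorem Tuple.sort_comp_perm_of_strictMono {m : ℕ} {β : Type*} [LinearOrder β]
    {g : Fin m → β} (hg : StrictMono g) (σ : Perm (Fin m)) : Tuple.sort (g ∘ σ) = σ⁻¹ := by
  refine (Tuple.eq_sort_iff.2 ⟨?_, fun i k hik h ↦ ?_⟩).symm
  · simpa [comp_def] using hg.monotone
  · exact absurd (by simpa using hg.injective h) hik.ne

theorem sum_injective_eq_sum_strictMono_sum_perm {α β M : Type*} [Fintype α] [DecidableEq α]
    [LinearOrder β] [AddCommMonoid M] {m : ℕ} {c : α → β} (hc : Injective c)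
    (f : (Fin m → α) → M) :
    ∑ I with Injective I, f I =
      ∑ I with StrictMono fun k ↦ c (I k), ∑ σ : Perm (Fin m), f (I ∘ σ) := by
  rw [← sum_product']
  symm
  refine sum_nbij' (fun p ↦ p.1 ∘ p.2)
    (fun I ↦ (I ∘ Tuple.sort (c ∘ I), (Tuple.sort (c ∘ I))⁻¹)) ?_ ?_ ?_ ?_ (fun _ _ ↦ rfl)
  · rintro ⟨J, σ⟩ hJ
    simp only [mem_product, mem_filter, mem_univ, true_and, and_true] at hJ ⊢
    exact hJ.injective.of_comp.comp σ.injective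
  · intro I hI
    simp only [mem_product, mem_filter, mem_univ, true_and, and_true] at hI ⊢
    exact (Tuple.monotone_sort _).strictMono_of_injective ((hc.comp hI).comp (Equiv.injective _))
  · rintro ⟨J, σ⟩ hJ
    simp only [mem_product, mem_filter, mem_univ, true_and, and_true] at hJ
    have hsort : Tuple.sort (c ∘ (J ∘ σ)) = σ⁻¹ := Tuple.sort_comp_perm_of_strictMono hJ σ
    simp [hsort, comp_assoc]
  · intro I _
    ext k : 1
    simp

theorem eq_sum_smul_eMono {b : ℕ} (a : Exterior b) : a = ∑ S, a S • eMono S := by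
  funext T
  simp [eMono]

theorem MultilinearMap.apply_const_eq_sum_eMono {b m : ℕ}
    (j : MultilinearMap ℤ (fun _ : Fin m => Exterior b) (Exterior b)) (a : Exterior b) :
    j (fun _ => a) =
      ∑ I : Fin m → Finset (Fin b), (∏ k, a (I k)) • j (fun k => eMono (I k)) := by
  conv_lhs => rw [eq_sum_smul_eMono a, j.map_sum]
  simp only [j.map_smul_univ]

theorem insertion_power_divisible_general (b m : ℕ)
    (j : MultilinearMap ℤ (fun _ : Fin m => Exterior b) (Exterior b))
    (hsym : ∀ (σ : Equiv.Perm (Fin m)) (v : Fin m → Exterior b), j (v ∘ σ) = j v)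
    (hvan : ∀ I : Fin m → Finset (Fin b), ¬ OneRegular I → j (fun k => eMono (I k)) = 0)
    (hrep : ∀ I : Fin m → Finset (Fin b), ¬ Function.Injective I →
      j (fun k => eMono (I k)) = 0)
    (a : Exterior b) :
    j (fun _ => a) =
        (m.factorial : ℤ) •
          ∑ I ∈ Finset.univ.filter
              (fun I : Fin m → Finset (Fin b) =>
                OneRegular I ∧ StrictMono fun k => subsetCode (I k)),
            (∏ k : Fin m, a (I k)) • j (fun k => eMono (I k)) ∧
      ∃ c : Exterior b, j (fun _ => a) = (m.factorial : ℤ) • c := by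
  set term : (Fin m → Finset (Fin b)) → Exterior b :=
    fun I ↦ (∏ k, a (I k)) • j (fun k => eMono (I k))
  have hsum_perm (I : Fin m → Finset (Fin b)) :
      ∑ σ : Perm (Fin m), term (I ∘ σ) = (m.factorial : ℤ) • term I := by
    have hinv (σ : Perm (Fin m)) : term (I ∘ σ) = term I := by
      simp only [term, comp_apply, Equiv.prod_comp σ fun k ↦ a (I k)]
      exact congrArg _ (hsym σ fun k ↦ eMono (I k))
    simp [hinv, Fintype.card_perm]
  have key : j (fun _ => a) = (m.factorial : ℤ) • ∑ I with
      OneRegular I ∧ StrictMono fun k => subsetCode (I k), term I := by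
    calc j (fun _ => a) = ∑ I, term I := j.apply_const_eq_sum_eMono a
      _ = ∑ I with Injective I, term I :=
        (sum_subset (subset_univ _) fun I _ hI ↦ by simp [term, hrep I (by simpa using hI)]).symm
      _ = ∑ I with StrictMono fun k => subsetCode (I k), (m.factorial : ℤ) • term I :=
        (sum_injective_eq_sum_strictMono_sum_perm subsetCode_injective term).trans
          (sum_congr rfl fun I _ ↦ hsum_perm I)
      _ = _ := by
        rw [← smul_sum]
        refine congrArg _ (sum_subset (fun I ↦ by simp +contextual) fun I hI hI' ↦ ?_).symm
        have hnreg : ¬ OneRegular I := fun h ↦ hI' (by simp_all)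
        simp [term, hvan I hnreg]
  exact ⟨key, _, key⟩

/-- Let `j = j_m` be the symmetric multilinear insertion product:
it vanishes on tuples of basis monomials which are not 1-regular (in particular on tuples
with a repeated subset).  Then for `a = ∑_I a_I e^I` a sum of odd-degree basis monomials,
`j_m(a,…,a) = m! ∑_{{I_1,…,I_m} 1-regular, pairwise distinct} a_{I_1}⋯a_{I_m}
j_m(e^{I_1},…,e^{I_m})` (the unordered sum being realized as the sum over tuples which
are strictly increasing in a fixed linear order on subsets); in particular,
`j_m(a,…,a)` is divisible by `m!` in `Λ*(ℤ^b)`. -/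
theorem insertion_power_divisible (b m : ℕ) (hm : 1 ≤ m)
    (j : MultilinearMap ℤ (fun _ : Fin m => Exterior b) (Exterior b))
    (hsym : ∀ (σ : Equiv.Perm (Fin m)) (v : Fin m → Exterior b), j (v ∘ σ) = j v)
    (hvan : ∀ I : Fin m → Finset (Fin b), ¬ OneRegular I → j (fun k => eMono (I k)) = 0)
    (hrep : ∀ I : Fin m → Finset (Fin b), ¬ Function.Injective I →
      j (fun k => eMono (I k)) = 0)
    (a : Exterior b) (ha : ∀ S : Finset (Fin b), a S ≠ 0 → Odd S.card) :
    j (fun _ => a) =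
        (m.factorial : ℤ) •
          ∑ I ∈ Finset.univ.filter
              (fun I : Fin m → Finset (Fin b) =>
                OneRegular I ∧ StrictMono fun k => subsetCode (I k)),
            (∏ k : Fin m, a (I k)) • j (fun k => eMono (I k)) ∧
      ∃ c : Exterior b, j (fun _ => a) = (m.factorial : ℤ) • c :=
  insertion_power_divisible_general b m j hsym hvan hrep a
end

section
/- Let a ∈ Λ^3(ℤ^b) and define K(a)_{2n+1} = a^{∘n} (the n-th insertion power), with a^{∘1} = a. Then K(a) is a twisting sequence on the exterior algebra Λ*(ℤ^b) with zero differential: for every n ≥ 2, Σ_{i+j=n, i,j≥1} a^{∘i} ∧ a^{∘j} = 0 in Λ^{2n+2}(ℤ^b). -/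
open scoped Classical

/-- Number of inversions between `A` and `B`. -/
def invBetween {b : ℕ} (A B : Finset (Fin b)) : ℕ :=
  ∑ x ∈ A, (B.filter fun y => y < x).card

/-- The exterior (wedge) product. -/
def wedge {b : ℕ} (f g : Exterior b) : Exterior b := fun S =>
  ∑ A ∈ S.powerset, (-1 : ℤ) ^ invBetween A (S \ A) * f A * g (S \ A)

/-- First insertion (cup-1 of monomials): if `|I ∩ J| = 1` with `I = I_0 < I∩J < I_1`,
this is `e^{I_0} ∧ e^J ∧ e^{I_1}`, else `0`. -/
noncomputable def ins2 {b : ℕ} (I J : Finset (Fin b)) : Exterior b :=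
  if h : (I ∩ J).card = 1 then
    let j := (I ∩ J).min' (Finset.card_pos.mp (by omega))
    wedge (wedge (eMono (I.filter fun x => x < j)) (eMono J))
      (eMono (I.filter fun x => j < x))
  else 0

/-- Insert the monomial `e^K` into an arbitrary element. -/
noncomputable def insMono {b : ℕ} (x : Exterior b) (K : Finset (Fin b)) : Exterior b :=
  ∑ S : Finset (Fin b), x S • ins2 S K

/-- Greedy evaluation of the insertion product of a 1-regular family: repeatedly insert a
remaining set meeting the current union in exactly one point (the value is independent of
the choices; for non-1-regular families the process fails, yielding `0`). -/
noncomputable def greedyGo {b : ℕ} :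
    ℕ → Exterior b → Finset (Fin b) → List (Finset (Fin b)) → Exterior b
  | 0, x, _, rem => if rem.isEmpty then x else 0
  | fuel + 1, x, U, rem =>
    if rem.isEmpty then x
    else
      match rem.find? (fun K => (U ∩ K).card == 1) with
      | none => 0
      | some K => greedyGo fuel (insMono x K) (U ∪ K) (rem.erase K)

/-- The insertion product `j_m(e^{I_1},…,e^{I_m})` of a family of subsets. -/
noncomputable def jFam {b : ℕ} : List (Finset (Fin b)) → Exterior b
  | [] => 0
  | I :: rest => greedyGo rest.length (eMono I) I rest

/-- The `m`-th insertion power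
`a^{∘m} = ∑_{{I_1,…,I_m} 1-regular} a_{I_1}⋯a_{I_m} j_m(e^{I_1},…,e^{I_m})`, the sum
over unordered families realized as the sum over strictly increasing tuples. -/
noncomputable def apow {b : ℕ} (a : Exterior b) (m : ℕ) : Exterior b :=
  ∑ I ∈ Finset.univ.filter
      (fun I : Fin m → Finset (Fin b) => StrictMono fun k => subsetCode (I k)),
    (∏ k : Fin m, a (I k)) • jFam (List.ofFn I)

/-!
Every monomial occurring in `a` has odd degree, and inserting an odd monomial into an element
preserves the parity of its degrees, so every insertion power `a^{∘m}` is odd. Odd elements of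
the exterior algebra anticommute, so the sum `S` of the `a^{∘i} ∧ a^{∘(n-i)}` satisfies
`S = -S` (reindex by `i ↦ n - i`), and `S = 0` since `Λ*(ℤ^b)` is torsion-free.
-/

open Finset

theorem Finset.card_filter_lt_add_card_filter_gt {α : Type*} [LinearOrder α] {S : Finset α}
    {j : α} (hj : j ∈ S) : #(S.filter (· < j)) + #(S.filter (j < ·)) + 1 = #S := by
  have hge : S.filter (¬ · < j) = insert j (S.filter (j < ·)) := by
    ext x
    simp only [mem_filter, not_lt, mem_insert, le_iff_eq_or_lt]
    constructor
    · rintro ⟨hx, rfl | hjx⟩ <;> simp_all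
    · rintro (rfl | ⟨hx, hjx⟩) <;> simp_all
  conv_rhs => rw [← card_filter_add_card_filter_not (· < j), hge]
  rw [card_insert_of_notMem (by simp), add_assoc]

def parityPart (b : ℕ) (p : ZMod 2) : Submodule ℤ (Exterior b) where
  carrier := {f | ∀ S, f S ≠ 0 → (S.card : ZMod 2) = p}
  add_mem' {f g} hf hg S hS := by
    by_cases hfS : f S = 0
    · exact hg S (by simpa [hfS] using hS)
    · exact hf S hfS
  zero_mem' S hS := absurd rfl hS
  smul_mem' c f hf S hS := hf S (right_ne_zero_of_mul hS)

section Parity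

variable {b : ℕ}

theorem eMono_mem_parityPart (I : Finset (Fin b)) : eMono I ∈ parityPart b I.card := by
  intro S hS
  rw [show S = I by by_contra h; simp [eMono, h] at hS]

theorem wedge_mem_parityPart {f g : Exterior b} {p q : ZMod 2} (hf : f ∈ parityPart b p)
    (hg : g ∈ parityPart b q) : wedge f g ∈ parityPart b (p + q) := by
  intro S hS
  obtain ⟨A, hA, hne⟩ := exists_ne_zero_of_sum_ne_zero hS
  have hcard : (S \ A).card + A.card = S.card := card_sdiff_add_card_eq_card (mem_powerset.mp hA)
  rw [← hcard, Nat.cast_add, hf A (right_ne_zero_of_mul (left_ne_zero_of_mul hne)),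
    hg (S \ A) (right_ne_zero_of_mul hne), add_comm]

theorem invBetween_add_invBetween {A B : Finset (Fin b)} (h : Disjoint A B) :
    invBetween A B + invBetween B A = A.card * B.card := by
  simp only [invBetween, card_filter]
  rw [sum_comm (s := B), ← sum_add_distrib, ← smul_eq_mul, ← sum_const]
  refine sum_congr rfl fun x hx => ?_
  rw [← sum_add_distrib, card_eq_sum_ones B]
  refine sum_congr rfl fun y hy => ?_
  rcases lt_or_gt_of_ne (ne_of_mem_of_not_mem hx (disjoint_right.mp h hy)).symm with hxy | hxy
  · simp [hxy, not_lt_of_gt hxy]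
  · simp [hxy, not_lt_of_gt hxy]

theorem neg_one_pow_invBetween_swap {A B : Finset (Fin b)} (h : Disjoint A B)
    (hA : Odd A.card) (hB : Odd B.card) :
    (-1 : ℤ) ^ invBetween A B = -(-1) ^ invBetween B A := by
  have hodd : Odd (invBetween A B + invBetween B A) := by
    rw [invBetween_add_invBetween h]; exact hA.mul hB
  calc (-1 : ℤ) ^ invBetween A B
      = (-1) ^ invBetween A B * ((-1) ^ invBetween B A * (-1) ^ invBetween B A) := by
        rw [← pow_add, Even.neg_one_pow ⟨_, rfl⟩, mul_one]
    _ = (-1) ^ (invBetween A B + invBetween B A) * (-1) ^ invBetween B A := by ring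
    _ = -(-1) ^ invBetween B A := by rw [hodd.neg_one_pow]; ring

theorem wedge_comm_of_odd {f g : Exterior b} (hf : f ∈ parityPart b 1)
    (hg : g ∈ parityPart b 1) : wedge f g = -wedge g f := by
  funext S
  rw [Pi.neg_apply, wedge, wedge, ← sum_neg_distrib]
  refine sum_nbij' (S \ ·) (S \ ·) ?_ ?_ ?_ ?_ ?_
  · exact fun A _ => mem_powerset.mpr sdiff_subset
  · exact fun A _ => mem_powerset.mpr sdiff_subset
  · exact fun A hA => Finset.sdiff_sdiff_eq_self (mem_powerset.mp hA)
  · exact fun A hA => Finset.sdiff_sdiff_eq_self (mem_powerset.mp hA)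
  intro A hA
  rw [Finset.sdiff_sdiff_eq_self (mem_powerset.mp hA)]
  by_cases hfA : f A = 0
  · simp [hfA]
  by_cases hgA : g (S \ A) = 0
  · simp [hgA]
  rw [neg_one_pow_invBetween_swap disjoint_sdiff
    ((ZMod.natCast_eq_one_iff_odd).mp (hf A hfA)) ((ZMod.natCast_eq_one_iff_odd).mp (hg _ hgA))]
  ring

theorem ins2_mem_parityPart (S K : Finset (Fin b)) :
    ins2 S K ∈ parityPart b ((S.card : ZMod 2) + K.card - 1) := by
  unfold ins2
  split_ifs with hc
  · have hj := (mem_inter.mp (min'_mem (S ∩ K) (card_pos.mp (by omega)))).1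
    convert wedge_mem_parityPart (wedge_mem_parityPart (eMono_mem_parityPart _)
      (eMono_mem_parityPart _)) (eMono_mem_parityPart _) using 2
    rw [← card_filter_lt_add_card_filter_gt hj]
    push_cast
    ring
  · exact zero_mem _

theorem insMono_mem_parityPart {x : Exterior b} {p : ZMod 2} (hx : x ∈ parityPart b p)
    {K : Finset (Fin b)} (hK : Odd K.card) : insMono x K ∈ parityPart b p := by
  refine sum_mem fun S _ => ?_
  by_cases hxS : x S = 0
  · simp [hxS]
  · convert Submodule.smul_mem _ (x S) (ins2_mem_parityPart S K)
    rw [hx S hxS, (ZMod.natCast_eq_one_iff_odd).mpr hK, add_sub_cancel_right]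

theorem greedyGo_mem_parityPart {p : ZMod 2} (fuel : ℕ) {x : Exterior b}
    (hx : x ∈ parityPart b p) (U : Finset (Fin b)) {rem : List (Finset (Fin b))}
    (hrem : ∀ K ∈ rem, Odd K.card) : greedyGo fuel x U rem ∈ parityPart b p := by
  induction fuel generalizing x U rem with
  | zero =>
    rw [greedyGo]
    split_ifs
    exacts [hx, zero_mem _]
  | succ fuel ih =>
    rw [greedyGo]
    split_ifs
    · exact hx
    split
    · exact zero_mem _
    · rename_i K hfind
      exact ih (insMono_mem_parityPart hx (hrem K (List.mem_of_find?_eq_some hfind))) _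
        fun K' hK' => hrem K' (List.mem_of_mem_erase hK')

theorem jFam_mem_parityPart {L : List (Finset (Fin b))} (hL : ∀ K ∈ L, Odd K.card) :
    jFam L ∈ parityPart b 1 := by
  cases L with
  | nil => exact zero_mem _
  | cons I rest =>
    have hI : ((I.card : ℕ) : ZMod 2) = 1 := (ZMod.natCast_eq_one_iff_odd).mpr (hL I (by simp))
    exact greedyGo_mem_parityPart _ (hI ▸ eMono_mem_parityPart I) I
      fun K hK => hL K (List.mem_cons_of_mem I hK)

theorem apow_mem_parityPart {a : Exterior b} (ha : ∀ S, a S ≠ 0 → Odd S.card) (m : ℕ) :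
    apow a m ∈ parityPart b 1 := by
  refine sum_mem fun I _ => ?_
  by_cases hprod : ∏ k, a (I k) = 0
  · simp [hprod]
  · refine Submodule.smul_mem _ _ (jFam_mem_parityPart fun K hK => ?_)
    obtain ⟨k, rfl⟩ := List.mem_ofFn.mp hK
    exact ha _ (prod_ne_zero_iff.mp hprod k (mem_univ k))

end Parity

theorem Finset.sum_Ioo_eq_zero_of_antisymm {G : Type*} [AddCommGroup G] [IsAddTorsionFree G]
    (F : ℕ → ℕ → G) (hF : ∀ i j, F i j = -F j i) (n : ℕ) :
    ∑ i ∈ Ioo 0 n, F i (n - i) = 0 := by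
  refine self_eq_neg.mp ?_
  calc ∑ i ∈ Ioo 0 n, F i (n - i) = ∑ i ∈ Ioo 0 n, F (n - i) (n - (n - i)) := by
        refine sum_nbij' (n - ·) (n - ·) ?_ ?_ ?_ ?_
          fun i hi => by rw [Nat.sub_sub_self (mem_Ioo.mp hi).2.le]
        all_goals intro i hi; simp only [mem_Ioo] at hi ⊢; omega
    _ = -∑ i ∈ Ioo 0 n, F i (n - i) := by
        rw [← sum_neg_distrib]
        refine sum_congr rfl fun i hi => ?_
        rw [Nat.sub_sub_self (mem_Ioo.mp hi).2.le, hF]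

theorem kraines_twisting_on_torus_general (b : ℕ) (a : Exterior b)
    (ha : ∀ S : Finset (Fin b), a S ≠ 0 → S.card = 3)
    (n : ℕ) :
    ∑ i ∈ Finset.Ioo 0 n, wedge (apow a i) (apow a (n - i)) = 0 := by
  have hodd (m : ℕ) : apow a m ∈ parityPart b 1 :=
    apow_mem_parityPart (fun S hS => ha S hS ▸ ⟨1, rfl⟩) m
  exact sum_Ioo_eq_zero_of_antisymm (fun i j => wedge (apow a i) (apow a j))
    (fun i j => wedge_comm_of_odd (hodd i) (hodd j)) n

/-- For `a ∈ Λ³(ℤ^b)`, the sequence `K(a)_{2n+1} = a^{∘n}` is a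
twisting sequence on the exterior algebra with zero differential: for every `n ≥ 2`,
`∑_{i+j=n, i,j ≥ 1} a^{∘i} ∧ a^{∘j} = 0` in `Λ^{2n+2}(ℤ^b)`. -/
theorem kraines_twisting_on_torus (b : ℕ) (a : Exterior b)
    (ha : ∀ S : Finset (Fin b), a S ≠ 0 → S.card = 3)
    (n : ℕ) (hn : 2 ≤ n) :
    ∑ i ∈ Finset.Ioo 0 n, wedge (apow a i) (apow a (n - i)) = 0 :=
  kraines_twisting_on_torus_general b a ha n
end
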